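/- arXiv:1205.6109 — 8 statements merged into one kernel-verified Lean document; each statement's English description precedes it below -/
import Mathlib

section
/- Let n be the Ricci operator on a pseudoH-type 2-step nilpotent metric Lie algebra n = z ⊕ v with nondegenerate center z of dimension m and v = z^⊥ of dimension n, where {z_α} is an orthonormal basis of z with signs ε_α = ⟨z_α,z_α⟩ and {e_a} is an orthonormal basis of v with signs ε̄_a. Then the Ricci curvature satisfies Ric(z,z') = -(n/4)⟨z,z'⟩ for z,z' ∈ z, Ric(z,x) = 0 for z ∈ z, x ∈ v, and Ric(x,x') = (m/2)⟨x,x'⟩ for x,x' ∈ v, where Ric(z,z') = (1/4)Σ_a ε̄_a ⟨J_z e_a, J_{z'} e_a⟩ and Ric(x,x') = -(1/2)Σ_α ε_α ⟨J_{z_α} x, J_{z_α} x'⟩. -/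
open Finset Module

/-- Ricci curvature of a pseudoH-type algebra with
nondegenerate center. -/
theorem pseudoH_ricci {L : Type*} [LieRing L] [LieAlgebra ℝ L]
    (B : L →ₗ[ℝ] L →ₗ[ℝ] ℝ)
    (hsymm : ∀ x y : L, B x y = B y x)
    (𝔷 v : Submodule ℝ L)
    (hcenter : ∀ z ∈ 𝔷, ∀ x : L, ⁅z, x⁆ = 0)
    (hbracket : ∀ x y : L, ⁅x, y⁆ ∈ 𝔷)
    (hv : ∀ x : L, x ∈ v ↔ ∀ z ∈ 𝔷, B x z = 0)
    (m nn : ℕ)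
    (z : Fin m → L) (e : Fin nn → L) (ε : Fin m → ℝ) (ε' : Fin nn → ℝ)
    (hzmem : ∀ α, z α ∈ 𝔷) (hemem : ∀ a, e a ∈ v)
    (hε : ∀ α, ε α = 1 ∨ ε α = -1) (hε' : ∀ a, ε' a = 1 ∨ ε' a = -1)
    (horthz : ∀ α β, B (z α) (z β) = if α = β then ε α else 0)
    (horthe : ∀ a b, B (e a) (e b) = if a = b then ε' a else 0)
    (hzbasis : 𝔷 = Submodule.span ℝ (Set.range z))
    (hebasis : v = Submodule.span ℝ (Set.range e))
    (J : L → L →ₗ[ℝ] L)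
    (hJv : ∀ zz ∈ 𝔷, ∀ x ∈ v, J zz x ∈ v)
    (hJdef : ∀ zz ∈ 𝔷, ∀ x ∈ v, ∀ y ∈ v, B (J zz x) y = B zz ⁅x, y⁆)
    (hpseudoH : ∀ zz ∈ 𝔷, ∀ x ∈ v, J zz (J zz x) = (B zz zz) • x)
    (Ric : L →ₗ[ℝ] L →ₗ[ℝ] ℝ)
    (hRzz : ∀ zz ∈ 𝔷, ∀ zz' ∈ 𝔷,
      Ric zz zz' = (1 / 4) * ∑ a, ε' a * B (J zz (e a)) (J zz' (e a)))
    (hRzv : ∀ zz ∈ 𝔷, ∀ x ∈ v, Ric zz x = 0)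
    (hRvv : ∀ x ∈ v, ∀ x' ∈ v,
      Ric x x' = -(1 / 2) * ∑ α, ε α * B (J (z α) x) (J (z α) x')) :
    (∀ zz ∈ 𝔷, ∀ zz' ∈ 𝔷, Ric zz zz' = -((nn : ℝ) / 4) * B zz zz') ∧
    (∀ zz ∈ 𝔷, ∀ x ∈ v, Ric zz x = 0) ∧
    (∀ x ∈ v, ∀ x' ∈ v, Ric x x' = ((m : ℝ) / 2) * B x x') := by
  classical
  -- skew-symmetry of J with respect to B
  have hskew : ∀ zz ∈ 𝔷, ∀ x ∈ v, ∀ y ∈ v,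
      B (J zz x) y = - B x (J zz y) := by
    intro zz hz x hx y hy
    rw [hJdef zz hz x hx y hy, hsymm x (J zz y), hJdef zz hz y hy x hx,
      ← lie_skew, map_neg]
  have hε'sq : ∀ a, ε' a * ε' a = 1 := by
    intro a; rcases hε' a with h | h <;> rw [h] <;> norm_num
  have hεsq : ∀ α, ε α * ε α = 1 := by
    intro α; rcases hε α with h | h <;> rw [h] <;> norm_num
  have hε'ne : ∀ a, ε' a ≠ 0 := by
    intro a; rcases hε' a with h | h <;> rw [h] <;> norm_num
  -- nondegeneracy of B on v
  have hnd : ∀ w ∈ v, (∀ b, B w (e b) = 0) → w = 0 := by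
    intro w hw hb
    rw [hebasis] at hw
    obtain ⟨c, hc⟩ := (Finsupp.mem_span_range_iff_exists_finsupp).mp hw
    have hcb : ∀ b, c b = 0 := by
      intro b
      have h0 := hb b
      rw [← hc] at h0
      rw [Finsupp.sum_fintype _ _ (by intro i; simp)] at h0
      simp only [map_sum, map_smul, LinearMap.sum_apply, LinearMap.smul_apply,
        smul_eq_mul, horthe, mul_ite, mul_zero] at h0
      rw [Finset.sum_ite_eq' Finset.univ b (fun a => c a * ε' a)] at h0
      rw [if_pos (Finset.mem_univ b)] at h0
      exact (mul_eq_zero.mp h0).resolve_right (hε'ne b)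
    have : w = 0 := by
      rw [← hc]
      rw [Finsupp.sum_fintype _ _ (by intro i; simp)]
      exact Finset.sum_eq_zero fun a _ => by rw [hcb a, zero_smul]
    exact this
  -- additivity of J in the center variable, on v
  have hadd : ∀ zz ∈ 𝔷, ∀ zz' ∈ 𝔷, ∀ x ∈ v,
      J (zz + zz') x = J zz x + J zz' x := by
    intro zz hz zz' hz' x hx
    have hmem : J (zz + zz') x - (J zz x + J zz' x) ∈ v :=
      Submodule.sub_mem v (hJv _ (Submodule.add_mem 𝔷 hz hz') x hx)
        (Submodule.add_mem v (hJv _ hz x hx) (hJv _ hz' x hx))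
    have h0 : J (zz + zz') x - (J zz x + J zz' x) = 0 := by
      apply hnd _ hmem
      intro b
      have h1 := hJdef (zz + zz') (Submodule.add_mem 𝔷 hz hz') x hx (e b) (hemem b)
      have h2 := hJdef zz hz x hx (e b) (hemem b)
      have h3 := hJdef zz' hz' x hx (e b) (hemem b)
      have h4 : B (zz + zz') ⁅x, e b⁆ = B zz ⁅x, e b⁆ + B zz' ⁅x, e b⁆ := by
        rw [map_add]; rfl
      simp only [map_sub, map_add, LinearMap.sub_apply, LinearMap.add_apply]
      rw [h1, h2, h3, h4]; ring
    exact sub_eq_zero.mp h0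
  -- polarization of the pseudoH identity
  have hpol : ∀ zz ∈ 𝔷, ∀ zz' ∈ 𝔷, ∀ x ∈ v,
      J zz (J zz' x) + J zz' (J zz x) = (2 * B zz zz') • x := by
    intro zz hz zz' hz' x hx
    have hz2 : zz + zz' ∈ 𝔷 := Submodule.add_mem 𝔷 hz hz'
    have h1 := hpseudoH (zz + zz') hz2 x hx
    have h2 := hpseudoH zz hz x hx
    have h3 := hpseudoH zz' hz' x hx
    rw [hadd zz hz zz' hz' x hx, map_add,
      hadd zz hz zz' hz' (J zz x) (hJv zz hz x hx),
      hadd zz hz zz' hz' (J zz' x) (hJv zz' hz' x hx)] at h1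
    have h4 : B (zz + zz') (zz + zz')
        = B zz zz + B zz zz' + B zz zz' + B zz' zz' := by
      rw [map_add]
      simp only [LinearMap.add_apply, map_add]
      rw [hsymm zz' zz]; ring
    rw [h4] at h1
    have h5 : J zz (J zz x) + J zz' (J zz x) + (J zz (J zz' x) + J zz' (J zz' x))
        = (B zz zz) • x + (B zz zz' + B zz zz') • x + (B zz' zz') • x := by
      rw [h1]; rw [← add_smul, ← add_smul]; ring_nf
    rw [h2, h3] at h5
    have : J zz' (J zz x) + J zz (J zz' x) = (B zz zz' + B zz zz') • x := by
      have := h5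
      abel_nf at this ⊢
      linear_combination (norm := abel_nf) this
    rw [add_comm (J zz (J zz' x)) (J zz' (J zz x)), this, two_mul, add_smul]
  -- key pointwise identity on the e basis
  have hkey : ∀ zz ∈ 𝔷, ∀ zz' ∈ 𝔷, ∀ a,
      B (J zz (e a)) (J zz' (e a)) = -(B zz zz' * ε' a) := by
    intro zz hz zz' hz' a
    have h1 := hskew zz hz (e a) (hemem a) (J zz' (e a)) (hJv zz' hz' (e a) (hemem a))
    have h2 := hskew zz' hz' (e a) (hemem a) (J zz (e a)) (hJv zz hz (e a) (hemem a))
    have hs : B (J zz (e a)) (J zz' (e a)) = B (J zz' (e a)) (J zz (e a)) :=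
      hsymm _ _
    have hsum : B (e a) (J zz (J zz' (e a))) + B (e a) (J zz' (J zz (e a)))
        = 2 * B zz zz' * ε' a := by
      rw [← map_add, hpol zz hz zz' hz' (e a) (hemem a), map_smul]
      have : B (e a) (e a) = ε' a := by rw [horthe]; simp
      rw [smul_eq_mul, this]
    linarith
  refine ⟨?_, ?_, ?_⟩
  · intro zz hz zz' hz'
    rw [hRzz zz hz zz' hz']
    have : ∀ a : Fin nn, ε' a * B (J zz (e a)) (J zz' (e a)) = -(B zz zz') := by
      intro a
      rw [hkey zz hz zz' hz' a]
      linear_combination (-(B zz) zz') * hε'sq a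
    rw [Finset.sum_congr rfl (fun a _ => this a)]
    rw [Finset.sum_const, Finset.card_univ, Fintype.card_fin, nsmul_eq_mul]
    ring
  · intro zz hz x hx
    exact hRzv zz hz x hx
  · intro x hx x' hx'
    rw [hRvv x hx x' hx']
    have : ∀ α : Fin m, ε α * B (J (z α) x) (J (z α) x') = -(B x x') := by
      intro α
      have h1 := hskew (z α) (hzmem α) x hx (J (z α) x') (hJv (z α) (hzmem α) x' hx')
      rw [hpseudoH (z α) (hzmem α) x' hx', map_smul, smul_eq_mul] at h1
      have h2 : B (z α) (z α) = ε α := by rw [horthz]; simp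
      rw [h2] at h1
      rw [h1]
      linear_combination (-(B x) x') * hεsq α
    rw [Finset.sum_congr rfl (fun α _ => this α)]
    rw [Finset.sum_const, Finset.card_univ, Fintype.card_fin, nsmul_eq_mul]
    ring
end

section
/- Let n be a 2-step nilpotent Lie algebra whose Ricci operator in a basis adapted to the decomposition z = ℝz_1 ⊕ span(z_2,...,z_m) ⊕ v (with m ≥ 2, dim v = n ≥ 1) is diag(-n/4, (n/4)I_{m-1}, -((m-2)/2)I_n), and suppose there exist x, x', x'', x''' ∈ v with [x,x'] = z_1 and [x'',x'''] = z_2. If Ric = c·Id + D with D ∈ Der(n), then c = -(m-2) + n/4 and c = -(m-2) - n/4 simultaneously, forcing n = 0. Hence no nontrivial algebraic Ricci soliton exists. -/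
open Module

/-- pH-type with nondegenerate center of dimension `m ≥ 2`
admits no nontrivial algebraic Ricci soliton. -/
theorem pH_center_dim_ge_two_no_nilsoliton {L : Type*} [LieRing L] [LieAlgebra ℝ L]
    (𝔷 v : Submodule ℝ L) (m nn : ℕ) (hm : 2 ≤ m) (hn : 1 ≤ nn)
    (hmdim : m = finrank ℝ 𝔷) (hndim : nn = finrank ℝ v)
    (hcenter : ∀ z ∈ 𝔷, ∀ x : L, ⁅z, x⁆ = 0)
    (hbracket : ∀ x y : L, ⁅x, y⁆ ∈ 𝔷)
    (z1 z2 : L) (hz1 : z1 ∈ 𝔷) (hz2 : z2 ∈ 𝔷) (hz1ne : z1 ≠ 0) (hz2ne : z2 ≠ 0)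
    (Ric : L →ₗ[ℝ] L)
    (hRz1 : Ric z1 = (-((nn : ℝ) / 4)) • z1)
    (hRz2 : Ric z2 = ((nn : ℝ) / 4) • z2)
    (hRv : ∀ x ∈ v, Ric x = (-(((m : ℝ) - 2) / 2)) • x)
    (x x' x'' x''' : L)
    (hx : x ∈ v) (hx' : x' ∈ v) (hx'' : x'' ∈ v) (hx''' : x''' ∈ v)
    (hbr1 : ⁅x, x'⁆ = z1) (hbr2 : ⁅x'', x'''⁆ = z2)
    (c : ℝ) (D : L →ₗ[ℝ] L)
    (hD : ∀ X Y : L, D ⁅X, Y⁆ = ⁅D X, Y⁆ + ⁅X, D Y⁆)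
    (hRicD : ∀ X : L, Ric X = c • X + D X) :
    (c = -((m : ℝ) - 2) + (nn : ℝ) / 4 ∧ c = -((m : ℝ) - 2) - (nn : ℝ) / 4) ∧
      False := by
  have hDdef : ∀ X : L, D X = Ric X - c • X := by
    intro X; rw [hRicD X]; module
  have key : ∀ (a b y : L) (r : ℝ), a ∈ v → b ∈ v → ⁅a, b⁆ = y →
      Ric y = r • y → y ≠ 0 → r - c = -((m : ℝ) - 2) - 2 * c := by
    intro a b y r ha hb hab hRy hyne
    have hDa : D a = (-(((m : ℝ) - 2) / 2) - c) • a := by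
      rw [hDdef, hRv a ha]; module
    have hDb : D b = (-(((m : ℝ) - 2) / 2) - c) • b := by
      rw [hDdef, hRv b hb]; module
    have h1 : D y = (-((m : ℝ) - 2) - 2 * c) • y := by
      rw [← hab, hD a b, hDa, hDb, lie_smul, smul_lie, hab]; module
    have h2 : D y = (r - c) • y := by
      rw [hDdef, hRy]; module
    have := smul_left_injective ℝ hyne (h2.symm.trans h1)
    linarith [this]
  have e1 := key x x' z1 (-((nn : ℝ) / 4)) hx hx' hbr1 hRz1 hz1ne
  have e2 := key x'' x''' z2 ((nn : ℝ) / 4) hx'' hx''' hbr2 hRz2 hz2ne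
  have hnn : (1 : ℝ) ≤ (nn : ℝ) := by exact_mod_cast hn
  constructor
  · constructor <;> linarith
  · linarith
end

section
/- Let n = z ⊕ v be a 2-step nilpotent metric Lie algebra of pH-type with Lorentzian inner product whose center z is positive definite of dimension m and whose complement v has exactly one timelike direction (dimension n). Then m + 1 ≤ n. -/
open Module

/-- for Lorentzian pH-type with positive definite center,
`dim 𝔷 + 1 ≤ dim v`. -/
theorem pH_posdef_center_dim_ineq {L : Type*} [LieRing L] [LieAlgebra ℝ L]
    [FiniteDimensional ℝ L]
    (B : L →ₗ[ℝ] L →ₗ[ℝ] ℝ)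
    (hsymm : ∀ x y : L, B x y = B y x)
    (𝔷 v : Submodule ℝ L)
    (hcenter : ∀ z ∈ 𝔷, ∀ x : L, ⁅z, x⁆ = 0)
    (hbracket : ∀ x y : L, ⁅x, y⁆ ∈ 𝔷)
    (hv : ∀ x : L, x ∈ v ↔ ∀ z ∈ 𝔷, B x z = 0)
    (h𝔷pos : ∀ z ∈ 𝔷, z ≠ 0 → 0 < B z z)
    (e1 : L) (he1 : e1 ∈ v) (he1t : B e1 e1 = -1)
    (hvsig : ∀ x ∈ v, B x e1 = 0 → x ≠ 0 → 0 < B x x)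
    (ι : L →ₗ[ℝ] L)
    (hι𝔷 : ∀ z ∈ 𝔷, ι z = z) (hιe1 : ι e1 = -e1)
    (hιsp : ∀ x ∈ v, B x e1 = 0 → ι x = x)
    (j : L → L →ₗ[ℝ] L)
    (hjv : ∀ z ∈ 𝔷, ∀ x ∈ v, j z x ∈ v)
    (hjdef : ∀ z ∈ 𝔷, ∀ x ∈ v, ∀ y ∈ v, B (j z x) (ι y) = B z ⁅x, y⁆)
    (hpH : ∀ z ∈ 𝔷, ∀ x ∈ v, j z (j z x) = -((B z (ι z)) • x)) :
    finrank ℝ 𝔷 + 1 ≤ finrank ℝ v := by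
  -- e1 is nonzero
  have he1ne : e1 ≠ 0 := by
    intro h
    rw [h] at he1t; simp at he1t
  -- The form B(x, ι x) is positive definite on v
  have hpos : ∀ u ∈ v, u ≠ 0 → 0 < B u (ι u) := by
    intro u hu hne
    set a : ℝ := -(B u e1) with ha
    set w : L := u - a • e1 with hwdef
    have hw : w ∈ v := Submodule.sub_mem _ hu (Submodule.smul_mem _ _ he1)
    have hwe1 : B w e1 = 0 := by
      simp [hwdef, map_sub, map_smul, he1t, ha]
    have hιw : ι w = w := hιsp w hw hwe1
    have he1w : B e1 w = 0 := by rw [hsymm]; exact hwe1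
    have hu' : u = a • e1 + w := by simp [hwdef]
    have hιu : ι u = -(a • e1) + w := by
      rw [hu', map_add, map_smul, hιe1, hιw, smul_neg]
    have hexp : B u (ι u) = a * a + B w w := by
      rw [hιu]
      nth_rewrite 1 [hu']
      simp only [map_add, map_smul, map_neg, LinearMap.add_apply,
        LinearMap.neg_apply, LinearMap.smul_apply, smul_eq_mul, he1t, he1w, hwe1]
      ring
    rcases eq_or_ne w 0 with hw0 | hw0
    · have hane : a ≠ 0 := by
        intro ha0; apply hne; rw [hu', hw0, ha0]; simp
      rw [hexp, hw0]; simp; positivity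
    · have := hvsig w hw hwe1 hw0
      rw [hexp]; nlinarith
  -- nondegeneracy of B(·, ι·) on v
  have huniq : ∀ u1 ∈ v, ∀ u2 ∈ v, (∀ y ∈ v, B u1 (ι y) = B u2 (ι y)) → u1 = u2 := by
    intro u1 hu1 u2 hu2 h
    by_contra hne
    have hsub : u1 - u2 ∈ v := Submodule.sub_mem _ hu1 hu2
    have hne' : u1 - u2 ≠ 0 := sub_ne_zero.mpr hne
    have := hpos _ hsub hne'
    have hz : B (u1 - u2) (ι (u1 - u2)) = 0 := by
      simp only [map_sub, LinearMap.sub_apply]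
      have h1 := h u1 hu1
      have h2 := h u2 hu2
      linarith
    linarith [hz ▸ this]
  -- the hyperplane W ⊂ v orthogonal to e1 for B(·, ι·)
  set W : Submodule ℝ L := v ⊓ LinearMap.ker (B.flip (ι e1)) with hWdef
  have hmemW : ∀ z : 𝔷, j (z : L) e1 ∈ W := by
    intro z
    refine ⟨hjv _ z.2 _ he1, ?_⟩
    show B (j (z : L) e1) (ι e1) = 0
    rw [hjdef _ z.2 _ he1 _ he1, lie_self, map_zero]
  -- linearity of z ↦ j z e1
  have hadd : ∀ z1 z2 : 𝔷, j ((z1 : L) + z2) e1 = j (z1 : L) e1 + j (z2 : L) e1 := by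
    intro z1 z2
    apply huniq _ (hjv _ (Submodule.add_mem _ z1.2 z2.2) _ he1)
      _ (Submodule.add_mem _ (hjv _ z1.2 _ he1) (hjv _ z2.2 _ he1))
    intro y hy
    rw [hjdef _ (Submodule.add_mem _ z1.2 z2.2) _ he1 _ hy]
    simp only [map_add, LinearMap.add_apply]
    rw [hjdef _ z1.2 _ he1 _ hy, hjdef _ z2.2 _ he1 _ hy]
  have hsmul : ∀ (c : ℝ) (z : 𝔷), j (c • (z : L)) e1 = c • j (z : L) e1 := by
    intro c z
    apply huniq _ (hjv _ (Submodule.smul_mem _ _ z.2) _ he1)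
      _ (Submodule.smul_mem _ _ (hjv _ z.2 _ he1))
    intro y hy
    rw [hjdef _ (Submodule.smul_mem _ _ z.2) _ he1 _ hy]
    simp only [map_smul, LinearMap.smul_apply, smul_eq_mul]
    rw [hjdef _ z.2 _ he1 _ hy]
  -- the linear map 𝔷 → W
  let F : 𝔷 →ₗ[ℝ] W :=
    { toFun := fun z => ⟨j (z : L) e1, hmemW z⟩
      map_add' := fun z1 z2 => by
        ext
        simpa using hadd z1 z2
      map_smul' := fun c z => by
        ext
        simpa using hsmul c z }
  have hFinj : Function.Injective F := by
    rw [injective_iff_map_eq_zero]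
    intro z hz
    have hz0 : j (z : L) e1 = 0 := by
      have := congrArg (Subtype.val) hz
      simpa [F] using this
    have hpH' := hpH _ z.2 _ he1
    rw [hz0, map_zero] at hpH'
    have hBz : B (z : L) (ι z) = 0 := by
      by_contra hne
      apply he1ne
      have : (B (z : L) (ι z)) • e1 = 0 := by
        have := hpH'.symm
        rwa [neg_eq_zero] at this
      exact (smul_eq_zero.mp this).resolve_left hne
    rw [hι𝔷 _ z.2] at hBz
    have : (z : L) = 0 := by
      by_contra hne
      have := h𝔷pos _ z.2 hne
      linarith
    exact Subtype.ext this
  have h1 : finrank ℝ 𝔷 ≤ finrank ℝ W := LinearMap.finrank_le_finrank_of_injective hFinj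
  have hWlt : W < v := by
    refine lt_of_le_of_ne inf_le_left (fun h => ?_)
    have he1W : e1 ∈ W := h ▸ he1
    have h0 : B e1 (ι e1) = 0 := he1W.2
    rw [hιe1, map_neg, he1t] at h0
    norm_num at h0
  have h2 : finrank ℝ W < finrank ℝ v := Submodule.finrank_lt_finrank_of_lt hWlt
  omega
end

section
/- Let n = u ⊕ z ⊕ ℝv ⊕ span(e_1,...,e_n) be a Lorentzian pH-type 2-step nilpotent Lie algebra with degenerate center u ⊕ z where u = ℝu is the null part, with null vectors u, v satisfying ⟨u,v⟩ = 1, e_i spacelike, and n = 2k+1 odd. If [v, e_1] = u and [v, e_2] = z_1 for unit central z_1 hold, and Ric = c·Id + D with D ∈ Der(n), then both c = -m/2 and c = -(m-1)/2 must hold, a contradiction. Hence for n ≥ 2 there is no nontrivial nilsoliton; a nilsoliton exists only when n = 1, in which case the metric is flat. -/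
/-- Lorentzian pH-type with degenerate center and `n ≥ 2`
admits no nilsoliton (the derivation condition is contradictory). -/
theorem pH_degenerate_center_no_nilsoliton {L : Type*} [LieRing L] [LieAlgebra ℝ L]
    (B : L →ₗ[ℝ] L →ₗ[ℝ] ℝ)
    (hsymm : ∀ x y : L, B x y = B y x)
    (𝔷 : Submodule ℝ L) (m nn k : ℕ)
    (hm : m = Module.finrank ℝ 𝔷)
    (hnodd : nn = 2 * k + 1) (hn2 : 2 ≤ nn)
    (u v : L) (z1 : L) (e : Fin nn → L)
    (hunull : B u u = 0) (hvnull : B v v = 0) (huv : B u v = 1)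
    (hesp : ∀ a, B (e a) (e a) = 1)
    (hune : u ≠ 0) (hz1ne : z1 ≠ 0)
    (hucentral : ∀ x : L, ⁅u, x⁆ = 0)
    (hz1mem : z1 ∈ 𝔷) (hz1unit : B z1 z1 = 1)
    (h𝔷central : ∀ zz ∈ 𝔷, ∀ x : L, ⁅zz, x⁆ = 0)
    (hbr1 : ⁅v, e ⟨0, by omega⟩⁆ = u)
    (hbr2 : ⁅v, e ⟨1, by omega⟩⁆ = z1)
    (Ric : L →ₗ[ℝ] L)
    (hRu : Ric u = 0)
    (hRz : ∀ zz ∈ 𝔷, Ric zz = ((nn : ℝ) / 4) • zz)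
    (hRv : Ric v = (-(((nn : ℝ) - 2 * (m : ℝ) - 1) / 4)) • u)
    (hRe1 : Ric (e ⟨0, by omega⟩) = (-((m : ℝ) / 2)) • e ⟨0, by omega⟩)
    (hRe2 : Ric (e ⟨1, by omega⟩) = (-(((m : ℝ) - 1) / 2)) • e ⟨1, by omega⟩)
    (c : ℝ) (D : L →ₗ[ℝ] L)
    (hD : ∀ X Y : L, D ⁅X, Y⁆ = ⁅D X, Y⁆ + ⁅X, D Y⁆)
    (hRicD : ∀ X : L, Ric X = c • X + D X) :
    (c = -((m : ℝ) / 2) ∧ c = -(((m : ℝ) - 1) / 2)) ∧ False := by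
  have hDdef : ∀ X : L, D X = Ric X - c • X := by
    intro X; rw [hRicD X]; abel
  set e1 := e ⟨0, by omega⟩ with he1
  set e2 := e ⟨1, by omega⟩ with he2
  -- first derivation equation
  have h1 := hD v e1
  rw [hbr1] at h1
  rw [hDdef u, hDdef v, hDdef e1, hRu, hRv, hRe1] at h1
  simp only [sub_lie, lie_sub, smul_lie, lie_smul, hucentral, hbr1, smul_zero,
    zero_sub, zero_smul] at h1
  -- h1 should reduce to an equation of scalar multiples of u
  have hc1 : c = -((m : ℝ) / 2) := by
    have h1' : (-((m : ℝ) / 2) - c) • u = 0 := by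
      linear_combination (norm := module) -h1
    rcases smul_eq_zero.mp h1' with h | h
    · linarith [h]
    · exact absurd h hune
  -- second derivation equation
  have hRz1 := hRz z1 hz1mem
  have h2 := hD v e2
  rw [hbr2] at h2
  rw [hDdef z1, hDdef v, hDdef e2, hRz1, hRv, hRe2] at h2
  simp only [sub_lie, lie_sub, smul_lie, lie_smul, hucentral, hbr2, smul_zero,
    zero_sub, zero_smul] at h2
  have hc2 : ((nn : ℝ) / 4 + c + ((m : ℝ) - 1) / 2) • z1 = 0 := by
    linear_combination (norm := module) h2
  have hnn2 : (nn : ℝ) = 2 := by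
    rcases smul_eq_zero.mp hc2 with h | h
    · rw [hc1] at h; linarith [h]
    · exact absurd h hz1ne
  have : nn = 2 := by exact_mod_cast hnn2
  omega
end

section
/- Let n be the 7-dimensional quaternionic Heisenberg-type Lie algebra with basis {u_1, u_2, z, v_1, v_2, e_1, e_2}, brackets [e_1,e_2] = z, [v_1,v_2] = z, [e_1,v_1] = u_1, [e_2,v_1] = u_2, [e_1,v_2] = u_2, [e_2,v_2] = -u_1, and pseudo-Riemannian metric with ⟨u_i,v_j⟩ = δ_{ij}, ⟨z,z⟩ = ε = ±1, ⟨e_a,e_a⟩ = ε̄_a = ±1. Its Ricci operator is (1/2)ε ε̄_1 ε̄_2 · diag(0, 0, 1, 0, 0, -1, -1) (acting as 0 on u_1,u_2,v_1,v_2, as (1/2)ε ε̄_1 ε̄_2 on z, and as -(1/2)ε ε̄_1 ε̄_2 on e_1,e_2), and there exist no real constant c and derivation D of n with Ric = c·Id + D. Hence this metric is not an algebraic Ricci soliton. -/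
/-- the 7-dimensional quaternionic Heisenberg-type algebra with
degenerate center is not an algebraic Ricci soliton. -/
theorem quaternionic_heisenberg_not_nilsoliton
    {L : Type*} [LieRing L] [LieAlgebra ℝ L]
    (u1 u2 z v1 v2 e1 e2 : L)
    (hbasis : LinearIndependent ℝ ![u1, u2, z, v1, v2, e1, e2])
    (hspan : Submodule.span ℝ {u1, u2, z, v1, v2, e1, e2} = ⊤)
    (hucentral1 : ∀ x : L, ⁅u1, x⁆ = 0)
    (hucentral2 : ∀ x : L, ⁅u2, x⁆ = 0)
    (hzcentral : ∀ x : L, ⁅z, x⁆ = 0)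
    (hb1 : ⁅e1, e2⁆ = z) (hb2 : ⁅v1, v2⁆ = z)
    (hb3 : ⁅e1, v1⁆ = u1) (hb4 : ⁅e2, v1⁆ = u2)
    (hb5 : ⁅e1, v2⁆ = u2) (hb6 : ⁅e2, v2⁆ = -u1)
    (B : L →ₗ[ℝ] L →ₗ[ℝ] ℝ)
    (hsymm : ∀ x y : L, B x y = B y x)
    (ε ε1 ε2 : ℝ)
    (hε : ε = 1 ∨ ε = -1) (hε1 : ε1 = 1 ∨ ε1 = -1) (hε2 : ε2 = 1 ∨ ε2 = -1)
    (hu1v1 : B u1 v1 = 1) (hu1v2 : B u1 v2 = 0)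
    (hu2v1 : B u2 v1 = 0) (hu2v2 : B u2 v2 = 1)
    (hzz : B z z = ε) (he1e1 : B e1 e1 = ε1) (he2e2 : B e2 e2 = ε2)
    (Ric : L →ₗ[ℝ] L)
    (hRu1 : Ric u1 = 0) (hRu2 : Ric u2 = 0)
    (hRv1 : Ric v1 = 0) (hRv2 : Ric v2 = 0)
    (hRz : Ric z = ((1 / 2) * ε * ε1 * ε2) • z)
    (hRe1 : Ric e1 = (-((1 / 2) * ε * ε1 * ε2)) • e1)
    (hRe2 : Ric e2 = (-((1 / 2) * ε * ε1 * ε2)) • e2) :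
    ¬ ∃ (c : ℝ) (D : L →ₗ[ℝ] L),
      (∀ X Y : L, D ⁅X, Y⁆ = ⁅D X, Y⁆ + ⁅X, D Y⁆) ∧
      (∀ X : L, Ric X = c • X + D X) := by

  rintro ⟨c, D, hder, heq⟩
  set k : ℝ := (1 / 2) * ε * ε1 * ε2 with hk
  have hu1ne : u1 ≠ 0 := by simpa using hbasis.ne_zero 0
  have hzne : z ≠ 0 := by simpa using hbasis.ne_zero 2
  have hDe1 : D e1 = (-k - c) • e1 := by
    have h := heq e1; rw [hRe1] at h
    have h2 : D e1 = (-k) • e1 - c • e1 := eq_sub_of_add_eq' h.symm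
    rw [h2, ← sub_smul]
  have hDe2 : D e2 = (-k - c) • e2 := by
    have h := heq e2; rw [hRe2] at h
    have h2 : D e2 = (-k) • e2 - c • e2 := eq_sub_of_add_eq' h.symm
    rw [h2, ← sub_smul]
  have hDv1 : D v1 = (-c) • v1 := by
    have h := heq v1; rw [hRv1] at h
    have h2 : D v1 = 0 - c • v1 := eq_sub_of_add_eq' h.symm
    rw [h2, zero_sub, ← neg_smul]
  have hDu1 : D u1 = (-c) • u1 := by
    have h := heq u1; rw [hRu1] at h
    have h2 : D u1 = 0 - c • u1 := eq_sub_of_add_eq' h.symm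
    rw [h2, zero_sub, ← neg_smul]
  have hDz : D z = (k - c) • z := by
    have h := heq z; rw [hRz] at h
    have h2 : D z = k • z - c • z := eq_sub_of_add_eq' h.symm
    rw [h2, ← sub_smul]
  -- from [e1, v1] = u1
  have eq1 : (-c) • u1 = ((-k - c) + -c) • u1 := by
    have h := hder e1 v1
    rw [hb3, hDu1, hDe1, hDv1, smul_lie, lie_smul, hb3, ← add_smul] at h
    exact h
  have hc : c = -k := by
    have := smul_left_injective ℝ hu1ne eq1
    linarith
  -- from [e1, e2] = z
  have eq2 : (k - c) • z = ((-k - c) + (-k - c)) • z := by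
    have h := hder e1 e2
    rw [hb1, hDz, hDe1, hDe2, smul_lie, lie_smul, hb1, ← add_smul] at h
    exact h
  have hk0 : k = 0 := by
    have := smul_left_injective ℝ hzne eq2
    linarith
  rw [hk] at hk0
  rcases hε with h | h <;> rcases hε1 with h1 | h1 <;> rcases hε2 with h2 | h2 <;>
    rw [h, h1, h2] at hk0 <;> norm_num at hk0
end

section
/- In a 2-step nilpotent Lie algebra with nondegenerate metric and decomposition n = U ⊕ Z ⊕ V ⊕ E as in Cordero–Parker (U the null part of the center, Z its nondegenerate complement in the center, V null paired with U, E nondegenerate), the Ricci tensor satisfies Ric(u, ·) = 0 for all u ∈ U, and Ric(e, z) = 0 for all e ∈ E and z ∈ Z. -/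
open Module

lemma exists_dual_pair {L : Type*} [AddCommGroup L] [Module ℝ L] [FiniteDimensional ℝ L]
    (B : L →ₗ[ℝ] L →ₗ[ℝ] ℝ) (P Q : Submodule ℝ L)
    (hP : ∀ p ∈ P, (∀ q ∈ Q, B p q = 0) → p = 0)
    (hQ : ∀ q ∈ Q, (∀ p ∈ P, B p q = 0) → q = 0) :
    ∃ (n : ℕ) (p q : Fin n → L), (∀ i, p i ∈ P) ∧ (∀ i, q i ∈ Q) ∧
      (∀ i j, B (p i) (q j) = if i = j then 1 else 0) ∧
      (∀ x ∈ P, x ∈ Submodule.span ℝ (Set.range p)) ∧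
      (∀ x ∈ Q, x ∈ Submodule.span ℝ (Set.range q)) := by
  classical
  set F : ↥P →ₗ[ℝ] ↥Q →ₗ[ℝ] ℝ := LinearMap.compl₁₂ B P.subtype Q.subtype with hF
  have hFapp : ∀ (x : ↥P) (y : ↥Q), F x y = B x y := fun x y => rfl
  have hFinj : Function.Injective F := by
    rw [← LinearMap.ker_eq_bot, LinearMap.ker_eq_bot']
    intro m hm
    have : (m : L) = 0 := hP m m.2 (fun q hq => by
      have := LinearMap.congr_fun hm ⟨q, hq⟩
      simpa [hFapp] using this)
    exact Subtype.ext this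
  have hGinj : Function.Injective F.flip := by
    rw [← LinearMap.ker_eq_bot, LinearMap.ker_eq_bot']
    intro m hm
    have : (m : L) = 0 := hQ m m.2 (fun p hp => by
      have := LinearMap.congr_fun hm ⟨p, hp⟩
      simpa [hFapp] using this)
    exact Subtype.ext this
  have hrk : finrank ℝ ↥P = finrank ℝ ↥Q := by
    have h1 : finrank ℝ ↥P ≤ finrank ℝ (Dual ℝ ↥Q) :=
      LinearMap.finrank_le_finrank_of_injective hFinj
    have h2 : finrank ℝ ↥Q ≤ finrank ℝ (Dual ℝ ↥P) :=
      LinearMap.finrank_le_finrank_of_injective hGinj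
    rw [Subspace.dual_finrank_eq] at h1 h2
    omega
  have hrk2 : finrank ℝ ↥Q = finrank ℝ (Dual ℝ ↥P) := by
    rw [Subspace.dual_finrank_eq, hrk]
  have hbij : Function.Bijective F.flip :=
    ⟨hGinj, (LinearMap.injective_iff_surjective_of_finrank_eq_finrank hrk2).mp hGinj⟩
  set e : ↥Q ≃ₗ[ℝ] Dual ℝ ↥P := LinearEquiv.ofBijective F.flip hbij with he
  set bP : Basis (Fin (finrank ℝ ↥P)) ℝ ↥P := Module.finBasis ℝ ↥P with hbP
  set bQ : Basis (Fin (finrank ℝ ↥P)) ℝ ↥Q := bP.dualBasis.map e.symm with hbQ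
  refine ⟨finrank ℝ ↥P, fun i => (bP i : L), fun i => (bQ i : L),
    fun i => (bP i).2, fun i => (bQ i).2, ?_, ?_, ?_⟩
  · intro i j
    have : B (bP i) (bQ j) = F (bP i) (bQ j) := rfl
    rw [this]
    have h1 : F (bP i) (bQ j) = (e (bQ j)) (bP i) := rfl
    rw [h1]
    have h2 : e (bQ j) = bP.dualBasis j := by
      rw [hbQ]
      simp [Basis.map_apply]
    rw [h2, Basis.coe_dualBasis, Basis.coord_apply, Basis.repr_self_apply]
  · intro x hx
    have : (fun i => ((bP i : L))) = P.subtype ∘ bP := rfl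
    rw [this, Set.range_comp, ← Submodule.map_span, bP.span_eq, Submodule.map_top,
      Submodule.range_subtype]
    exact hx
  · intro x hx
    have : (fun i => ((bQ i : L))) = Q.subtype ∘ bQ := rfl
    rw [this, Set.range_comp, ← Submodule.map_span, bQ.span_eq, Submodule.map_top,
      Submodule.range_subtype]
    exact hx

lemma trace_zero_of_dual {L : Type*} [AddCommGroup L] [Module ℝ L] [FiniteDimensional ℝ L]
    {ι : Type*} [Fintype ι] [DecidableEq ι]
    (B : L →ₗ[ℝ] L →ₗ[ℝ] ℝ) (b : Basis ι ℝ L) (d : ι → L)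
    (hdual : ∀ i j, B (b i) (d j) = if i = j then 1 else 0)
    (M : L →ₗ[ℝ] L) (h : ∀ i, B (M (b i)) (d i) = 0) :
    LinearMap.trace ℝ L M = 0 := by
  classical
  have repr_eq : ∀ (x : L) (j : ι), b.repr x j = B x (d j) := by
    intro x j
    conv_rhs => rw [← b.sum_repr x]
    rw [map_sum, LinearMap.sum_apply]
    have : ∀ i ∈ Finset.univ, (B ((b.repr x i) • b i)) (d j)
        = (b.repr x i) • (if i = j then (1:ℝ) else 0) := by
      intro i _
      rw [map_smul, LinearMap.smul_apply, hdual i j]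
    rw [Finset.sum_congr rfl this]
    simp
  rw [LinearMap.trace_eq_matrix_trace ℝ b M, Matrix.trace]
  apply Finset.sum_eq_zero
  intro j _
  rw [Matrix.diag_apply, LinearMap.toMatrix_apply, repr_eq, h]



/-- The curvature endomorphism `w ↦ R(w,x)y` of a left-invariant connection
`∇`, where `R(w,x)y = ∇_w ∇_x y - ∇_x ∇_w y - ∇_{[w,x]} y`. -/
noncomputable def curvatureEndo {L : Type*} [LieRing L] [LieAlgebra ℝ L]
    (nabla : L →ₗ[ℝ] L →ₗ[ℝ] L) (x y : L) : L →ₗ[ℝ] L :=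
  nabla.flip (nabla x y) - (nabla x) ∘ₗ (nabla.flip y)
    + (nabla.flip y) ∘ₗ (LieAlgebra.ad ℝ L x)

/-- The Ricci tensor `Ric(x,y) = tr (w ↦ R(w,x)y)` of a left-invariant
connection. -/
noncomputable def ricciTensor {L : Type*} [LieRing L] [LieAlgebra ℝ L]
    (nabla : L →ₗ[ℝ] L →ₗ[ℝ] L) (x y : L) : ℝ :=
  LinearMap.trace ℝ L (curvatureEndo nabla x y)

/-- in the Cordero–Parker decomposition `n = U ⊕ Z ⊕ V ⊕ E`,
the Ricci tensor satisfies `Ric(u,·) = 0` for `u ∈ U` and `Ric(e,z) = 0`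
for `e ∈ E`, `z ∈ Z`. -/
theorem cordero_parker_ricci_vanishing {L : Type*} [LieRing L] [LieAlgebra ℝ L]
    [FiniteDimensional ℝ L]
    (B : L →ₗ[ℝ] L →ₗ[ℝ] ℝ)
    (hsymm : ∀ x y : L, B x y = B y x)
    (hnondeg : ∀ x : L, (∀ y : L, B x y = 0) → x = 0)
    (h2step : ∀ x y w : L, ⁅⁅x, y⁆, w⁆ = 0)
    (U Z V E : Submodule ℝ L)
    -- U is the null part of the center, Z a nondegenerate complement in it:
    (hU : ∀ x : L, x ∈ U ↔ ((∀ y : L, ⁅x, y⁆ = 0) ∧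
      ∀ z : L, (∀ y : L, ⁅z, y⁆ = 0) → B x z = 0))
    (hZcentral : ∀ z ∈ Z, ∀ y : L, ⁅z, y⁆ = 0)
    (hUZ : ∀ x : L, (∀ y : L, ⁅x, y⁆ = 0) → x ∈ U ⊔ Z)
    (hUZdisj : U ⊓ Z = ⊥)
    (hZnondeg : ∀ z ∈ Z, (∀ z' ∈ Z, B z z' = 0) → z = 0)
    -- V is null and pairs nondegenerately with U:
    (hVnull : ∀ v ∈ V, ∀ v' ∈ V, B v v' = 0)
    (hVZ : ∀ v ∈ V, ∀ z ∈ Z, B v z = 0)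
    (hUVpair : ∀ u ∈ U, u ≠ 0 → ∃ v ∈ V, B u v ≠ 0)
    -- E is the orthogonal complement of U ⊕ Z ⊕ V, nondegenerate:
    (hE : ∀ x : L, x ∈ E ↔ ∀ y ∈ U ⊔ Z ⊔ V, B x y = 0)
    (hEnondeg : ∀ x ∈ E, (∀ y ∈ E, B x y = 0) → x = 0)
    (hdecomp : U ⊔ Z ⊔ V ⊔ E = ⊤)
    -- the Levi-Civita connection of the left-invariant metric:
    (nabla : L →ₗ[ℝ] L →ₗ[ℝ] L)
    (hKoszul : ∀ x y w : L,
      2 * B (nabla x y) w = B ⁅x, y⁆ w - B ⁅y, w⁆ x + B ⁅w, x⁆ y) :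
    (∀ u ∈ U, ∀ x : L, ricciTensor nabla u x = 0) ∧
    (∀ e ∈ E, ∀ z ∈ Z, ricciTensor nabla e z = 0) := by
  classical
  -- basic bracket facts
  have skewzero : ∀ a b : L, ⁅a, b⁆ = 0 → ⁅b, a⁆ = 0 := by
    intro a b h
    rw [← lie_skew, h, neg_zero]
  have hUc : ∀ u ∈ U, ∀ y : L, ⁅u, y⁆ = 0 := fun u hu => ((hU u).1 hu).1
  have hBuC : ∀ u ∈ U, ∀ x : L, (∀ y : L, ⁅x, y⁆ = 0) → B u x = 0 :=
    fun u hu => ((hU u).1 hu).2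
  have hEorth : ∀ e' ∈ E, ∀ y ∈ U ⊔ Z ⊔ V, B e' y = 0 := fun e' he' => (hE e').1 he'
  have hbrmem : ∀ a b : L, ⁅a, b⁆ ∈ U ⊔ Z ⊔ V := by
    intro a b
    have := hUZ ⁅a, b⁆ (h2step a b)
    exact Submodule.mem_sup_left this
  -- Koszul helper
  have koszulB : ∀ x y w : L, B ⁅x, y⁆ w = 0 → B ⁅y, w⁆ x = 0 → B ⁅w, x⁆ y = 0 →
      B (nabla x y) w = 0 := by
    intro x y w h1 h2 h3
    have hK := hKoszul x y w
    rw [h1, h2, h3] at hK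
    linarith
  have hB0 : ∀ w : L, B (0 : L) w = 0 := by intro w; simp
  have hnablaU : ∀ u ∈ U, ∀ y : L, nabla u y = 0 := by
    intro u hu y
    apply hnondeg
    intro w
    apply koszulB
    · rw [hUc u hu y]; exact hB0 w
    · rw [hsymm]; exact hBuC u hu _ (h2step y w)
    · rw [skewzero u w (hUc u hu w)]; exact hB0 y
  have hnablaCC : ∀ c' : L, (∀ y : L, ⁅c', y⁆ = 0) → ∀ z' : L, (∀ y : L, ⁅z', y⁆ = 0) →
      nabla c' z' = 0 := by
    intro c' hc' z' hz'
    apply hnondeg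
    intro w
    apply koszulB
    · rw [hc' z']; exact hB0 w
    · rw [hz' w]; exact hB0 c'
    · rw [skewzero c' w (hc' w)]; exact hB0 z'
  constructor
  · -- Ric(u, ·) = 0
    intro u hu x
    have h1 : nabla u = 0 := LinearMap.ext (hnablaU u hu)
    have h2 : LieAlgebra.ad ℝ L u = 0 := by
      apply LinearMap.ext
      intro w
      simpa [LieAlgebra.ad_apply] using hUc u hu w
    have hend : curvatureEndo nabla u x = 0 := by
      unfold curvatureEndo
      rw [h1, h2]
      simp
    rw [ricciTensor, hend, map_zero]
  · -- Ric(e, z) = 0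
    intro e he z hz
    have zc : ∀ y : L, ⁅z, y⁆ = 0 := hZcentral z hz
    have hM : ∀ w : L, curvatureEndo nabla e z w
        = nabla w (nabla e z) - nabla e (nabla w z) + nabla ⁅e, w⁆ z := by
      intro w
      simp [curvatureEndo, LinearMap.flip_apply, LieAlgebra.ad_apply]
    have hT3 : ∀ w : L, nabla ⁅e, w⁆ z = 0 := fun w => hnablaCC ⁅e, w⁆ (h2step e w) z zc
    -- F4 : B (nabla e z) y = 0 for central y
    have F4 : ∀ y : L, (∀ t : L, ⁅y, t⁆ = 0) → B (nabla e z) y = 0 := by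
      intro y hy
      apply koszulB
      · rw [skewzero z e (zc e)]; exact hB0 y
      · rw [zc y]; exact hB0 e
      · rw [hy e]; exact hB0 z
    have F5 : ∀ w y : L, (∀ t : L, ⁅y, t⁆ = 0) → B (nabla w z) y = 0 := by
      intro w y hy
      apply koszulB
      · rw [skewzero z w (zc w)]; exact hB0 y
      · rw [zc y]; exact hB0 w
      · rw [hy w]; exact hB0 z
    -- the four block claims
    have claimA : ∀ w ∈ U, curvatureEndo nabla e z w = 0 := by
      intro w hw
      rw [hM w, hT3 w, hnablaU w hw (nabla e z), hnablaU w hw z]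
      simp
    have claimB : ∀ w ∈ Z, ∀ z' ∈ Z, B (curvatureEndo nabla e z w) z' = 0 := by
      intro w hw z' hz'
      have e1 : B (nabla w (nabla e z)) z' = 0 := by
        apply koszulB
        · rw [hZcentral w hw (nabla e z)]; exact hB0 z'
        · rw [skewzero z' (nabla e z) (hZcentral z' hz' _)]; exact hB0 w
        · rw [hZcentral z' hz' w]; exact hB0 (nabla e z)
      have e2 : nabla w z = 0 := hnablaCC w (hZcentral w hw) z zc
      rw [hM w, hT3 w, e2]
      simp [e1]
    have claimC : ∀ w ∈ V, ∀ u ∈ U, B (curvatureEndo nabla e z w) u = 0 := by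
      intro w hw u hu
      have e1 : B (nabla w (nabla e z)) u = 0 := by
        apply koszulB
        · rw [hsymm]; exact hBuC u hu _ (h2step w (nabla e z))
        · rw [skewzero u (nabla e z) (hUc u hu _)]; exact hB0 w
        · rw [hUc u hu w]; exact hB0 (nabla e z)
      have e2 : B (nabla e (nabla w z)) u = 0 := by
        apply koszulB
        · rw [hsymm]; exact hBuC u hu _ (h2step e (nabla w z))
        · rw [skewzero u (nabla w z) (hUc u hu _)]; exact hB0 e
        · rw [hUc u hu e]; exact hB0 (nabla w z)
      rw [hM w, hT3 w]
      simp [map_sub, e1, e2]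
    have claimD : ∀ w ∈ E, ∀ e'' ∈ E, B (curvatureEndo nabla e z w) e'' = 0 := by
      intro w hw e'' he''
      have e1 : B (nabla w (nabla e z)) e'' = 0 := by
        apply koszulB
        · rw [hsymm]; exact hEorth e'' he'' _ (hbrmem w (nabla e z))
        · rw [hsymm]; exact hEorth w hw _ (hbrmem (nabla e z) e'')
        · rw [hsymm]; exact F4 _ (h2step e'' w)
      have e2 : B (nabla e (nabla w z)) e'' = 0 := by
        apply koszulB
        · rw [hsymm]; exact hEorth e'' he'' _ (hbrmem e (nabla w z))
        · rw [hsymm]; exact hEorth e he _ (hbrmem (nabla w z) e'')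
        · rw [hsymm]; exact F5 w _ (h2step e'' e)
      rw [hM w, hT3 w]
      simp [map_sub, e1, e2]
    -- orthogonality facts for the dual basis
    have hBUU : ∀ u ∈ U, ∀ u' ∈ U, B u u' = 0 :=
      fun u hu u' hu' => hBuC u hu u' (hUc u' hu')
    have hBUZ : ∀ u ∈ U, ∀ z' ∈ Z, B u z' = 0 :=
      fun u hu z' hz' => hBuC u hu z' (hZcentral z' hz')
    have hmemU : ∀ u ∈ U, u ∈ U ⊔ Z ⊔ V :=
      fun u hu => Submodule.mem_sup_left (Submodule.mem_sup_left hu)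
    have hmemZ : ∀ z' ∈ Z, z' ∈ U ⊔ Z ⊔ V :=
      fun z' hz' => Submodule.mem_sup_left (Submodule.mem_sup_right hz')
    have hmemV : ∀ v ∈ V, v ∈ U ⊔ Z ⊔ V := fun v hv => Submodule.mem_sup_right hv
    -- nondegeneracy of the U–V pairing on the V side
    have hVside : ∀ v ∈ V, (∀ u ∈ U, B u v = 0) → v = 0 := by
      intro v hv h0
      apply hnondeg
      intro y
      have hy : y ∈ U ⊔ Z ⊔ V ⊔ E := by rw [hdecomp]; trivial
      rcases Submodule.mem_sup.mp hy with ⟨x1, hx1, dd, hd, rfl⟩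
      rcases Submodule.mem_sup.mp hx1 with ⟨x2, hx2, cv, hcv, rfl⟩
      rcases Submodule.mem_sup.mp hx2 with ⟨a, ha, bz, hb, rfl⟩
      have h1 : B v a = 0 := by rw [hsymm]; exact h0 a ha
      have h2 : B v bz = 0 := hVZ v hv bz hb
      have h3 : B v cv = 0 := hVnull v hv cv hcv
      have h4 : B v dd = 0 := by rw [hsymm]; exact hEorth dd hd v (hmemV v hv)
      simp [map_add, h1, h2, h3, h4]
    have hUside : ∀ u ∈ U, (∀ v ∈ V, B u v = 0) → u = 0 := by
      intro u hu h0
      by_contra hne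
      obtain ⟨v, hv, hbv⟩ := hUVpair u hu hne
      exact hbv (h0 v hv)
    -- dual pairs
    obtain ⟨nU, pU, qV, hpU, hqV, hUVdual, hspanU, hspanV⟩ :=
      exists_dual_pair B U V hUside (fun q hq h0 => hVside q hq h0)
    obtain ⟨nZ, pZ, qZ, hpZ, hqZ, hZZdual, hspanZ, _⟩ :=
      exists_dual_pair B Z Z hZnondeg
        (fun q hq h0 => hZnondeg q hq (fun z' hz' => (hsymm q z').trans (h0 z' hz')))
    obtain ⟨nE, pE, qE, hpE, hqE, hEEdual, hspanE, _⟩ :=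
      exists_dual_pair B E E hEnondeg
        (fun q hq h0 => hEnondeg q hq (fun z' hz' => (hsymm q z').trans (h0 z' hz')))
    set b : Fin nU ⊕ Fin nU ⊕ Fin nZ ⊕ Fin nE → L :=
      Sum.elim pU (Sum.elim qV (Sum.elim pZ pE)) with hb
    set d : Fin nU ⊕ Fin nU ⊕ Fin nZ ⊕ Fin nE → L :=
      Sum.elim qV (Sum.elim pU (Sum.elim qZ qE)) with hd
    have hdual : ∀ i j, B (b i) (d j) = if i = j then 1 else 0 := by
      rintro (i | i | i | i) (j | j | j | j) <;>
        simp only [hb, hd, Sum.elim_inl, Sum.elim_inr]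
      · rw [hUVdual i j]
        by_cases hij : i = j
        · subst hij; simp
        · rw [if_neg hij, if_neg (by simp [hij])]
      · rw [if_neg (by simp)]; exact hBUU (pU i) (hpU i) (pU j) (hpU j)
      · rw [if_neg (by simp)]; exact hBUZ (pU i) (hpU i) (qZ j) (hqZ j)
      · rw [if_neg (by simp)]
        rw [hsymm]; exact hEorth (qE j) (hqE j) _ (hmemU (pU i) (hpU i))
      · rw [if_neg (by simp)]; exact hVnull (qV i) (hqV i) (qV j) (hqV j)
      · rw [hsymm, hUVdual j i]
        by_cases hij : i = j
        · subst hij; simp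
        · rw [if_neg (fun h => hij h.symm), if_neg (by simp [hij])]
      · rw [if_neg (by simp)]; exact hVZ (qV i) (hqV i) (qZ j) (hqZ j)
      · rw [if_neg (by simp)]
        rw [hsymm]; exact hEorth (qE j) (hqE j) _ (hmemV (qV i) (hqV i))
      · rw [if_neg (by simp)]
        rw [hsymm]; exact hVZ (qV j) (hqV j) (pZ i) (hpZ i)
      · rw [if_neg (by simp)]
        rw [hsymm]; exact hBUZ (pU j) (hpU j) (pZ i) (hpZ i)
      · rw [hZZdual i j]
        by_cases hij : i = j
        · subst hij; simp
        · rw [if_neg hij, if_neg (by simp [hij])]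
      · rw [if_neg (by simp)]
        rw [hsymm]; exact hEorth (qE j) (hqE j) _ (hmemZ (pZ i) (hpZ i))
      · rw [if_neg (by simp)]
        exact hEorth (pE i) (hpE i) _ (hmemV (qV j) (hqV j))
      · rw [if_neg (by simp)]
        exact hEorth (pE i) (hpE i) _ (hmemU (pU j) (hpU j))
      · rw [if_neg (by simp)]
        exact hEorth (pE i) (hpE i) _ (hmemZ (qZ j) (hqZ j))
      · rw [hEEdual i j]
        by_cases hij : i = j
        · subst hij; simp
        · rw [if_neg hij, if_neg (by simp [hij])]
    have hindep : LinearIndependent ℝ b := by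
      rw [Fintype.linearIndependent_iff]
      intro g hg j
      have hBsum : B (∑ i, g i • b i) (d j) = ∑ i, g i * (if i = j then (1:ℝ) else 0) := by
        rw [map_sum, LinearMap.sum_apply]
        refine Finset.sum_congr rfl fun i _ => ?_
        rw [map_smul, LinearMap.smul_apply, hdual i j, smul_eq_mul]
      rw [hg] at hBsum
      simp only [map_zero, LinearMap.zero_apply] at hBsum
      have hsum : ∑ i, g i * (if i = j then (1:ℝ) else 0) = g j := by
        simp [mul_ite]
      rw [hsum] at hBsum
      exact hBsum.symm
    have hspan : ⊤ ≤ Submodule.span ℝ (Set.range b) := by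
      rw [← hdecomp]
      have hU' : U ≤ Submodule.span ℝ (Set.range b) := by
        intro x hx
        refine Submodule.span_mono ?_ (hspanU x hx)
        rintro _ ⟨i, rfl⟩
        exact ⟨Sum.inl i, by simp [hb]⟩
      have hV' : V ≤ Submodule.span ℝ (Set.range b) := by
        intro x hx
        refine Submodule.span_mono ?_ (hspanV x hx)
        rintro _ ⟨i, rfl⟩
        exact ⟨Sum.inr (Sum.inl i), by simp [hb]⟩
      have hZ' : Z ≤ Submodule.span ℝ (Set.range b) := by
        intro x hx
        refine Submodule.span_mono ?_ (hspanZ x hx)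
        rintro _ ⟨i, rfl⟩
        exact ⟨Sum.inr (Sum.inr (Sum.inl i)), by simp [hb]⟩
      have hE' : E ≤ Submodule.span ℝ (Set.range b) := by
        intro x hx
        refine Submodule.span_mono ?_ (hspanE x hx)
        rintro _ ⟨i, rfl⟩
        exact ⟨Sum.inr (Sum.inr (Sum.inr i)), by simp [hb]⟩
      exact sup_le (sup_le (sup_le hU' hZ') hV') hE'
    set bb : Basis (Fin nU ⊕ Fin nU ⊕ Fin nZ ⊕ Fin nE) ℝ L := Basis.mk hindep hspan with hbb
    have hbbapp : ∀ i, bb i = b i := fun i => by rw [hbb, Basis.mk_apply]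
    have hdual' : ∀ i j, B (bb i) (d j) = if i = j then 1 else 0 := by
      intro i j; rw [hbbapp]; exact hdual i j
    have hclaims : ∀ i, B (curvatureEndo nabla e z (bb i)) (d i) = 0 := by
      rintro (i | i | i | i) <;> rw [hbbapp] <;>
        simp only [hb, hd, Sum.elim_inl, Sum.elim_inr]
      · rw [claimA (pU i) (hpU i)]; exact hB0 _
      · exact claimC (qV i) (hqV i) (pU i) (hpU i)
      · exact claimB (pZ i) (hpZ i) (qZ i) (hqZ i)
      · exact claimD (pE i) (hpE i) (qE i) (hqE i)
    exact trace_zero_of_dual B bb d hdual' (curvatureEndo nabla e z) hclaims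
end

section
/- Let n = u ⊕ z ⊕ ℝv ⊕ E be a Lorentzian pH-type 2-step nilpotent metric Lie algebra with degenerate center (u null, z positive definite of dimension m, v null with ⟨u,v⟩ = 1, E = span(e_1,...,e_n) spacelike). Then the pH-type condition forces dim E = n to be odd. -/
open Module

/-- Auxiliary: a finite-dimensional real space with a complex structure has even dimension. -/
lemma even_finrank_of_sq_eq_neg_one {V : Type*} [AddCommGroup V] [Module ℝ V]
    [FiniteDimensional ℝ V] (f : V →ₗ[ℝ] V) (hf : ∀ x, f (f x) = -x) :
    Even (finrank ℝ V) := by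
  have hcomp : f ∘ₗ f = -LinearMap.id := by
    ext x; simp [hf x]
  have hdet : LinearMap.det f * LinearMap.det f = (-1 : ℝ) ^ finrank ℝ V := by
    rw [← LinearMap.det_comp, hcomp]
    have : (-LinearMap.id : V →ₗ[ℝ] V) = (-1 : ℝ) • LinearMap.id := by
      ext x; simp
    rw [this, LinearMap.det_smul]
    simp
  rcases Nat.even_or_odd (finrank ℝ V) with h | h
  · exact h
  · exfalso
    rw [h.neg_one_pow] at hdet
    nlinarith [sq_nonneg (LinearMap.det f), hdet]

/-- for Lorentzian pH-type with degenerate center,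
`dim E` is odd. -/
theorem pH_degenerate_center_dimE_odd {L : Type*} [LieRing L] [LieAlgebra ℝ L]
    [FiniteDimensional ℝ L]
    (B : L →ₗ[ℝ] L →ₗ[ℝ] ℝ)
    (hsymm : ∀ x y : L, B x y = B y x)
    (hbracket2step : ∀ x y w : L, ⁅⁅x, y⁆, w⁆ = 0)
    (𝔷 E : Submodule ℝ L) (u v : L)
    (hunull : B u u = 0) (hvnull : B v v = 0) (huv : B u v = 1)
    (h𝔷pos : ∀ z ∈ 𝔷, z ≠ 0 → 0 < B z z)
    (hEpos : ∀ x ∈ E, x ≠ 0 → 0 < B x x)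
    (hucentral : ∀ x : L, ⁅u, x⁆ = 0)
    (h𝔷central : ∀ z ∈ 𝔷, ∀ x : L, ⁅z, x⁆ = 0)
    (ι : L →ₗ[ℝ] L)
    (hιu : ι u = v) (hιv : ι v = u)
    (hι𝔷 : ∀ z ∈ 𝔷, ι z = z) (hιE : ∀ x ∈ E, ι x = x)
    (j : L → L →ₗ[ℝ] L)
    (W : Submodule ℝ L) (hW : W = Submodule.span ℝ {v} ⊔ E)
    (hvE : v ∉ E)
    (hjW : ∀ z : L, (z ∈ 𝔷 ∨ z = u) → ∀ x ∈ W, j z x ∈ W)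
    (hpH : ∀ z : L, (z ∈ 𝔷 ∨ z = u) → ∀ x ∈ W,
      j z (j z x) = -((B z (ι z)) • x)) :
    Odd (finrank ℝ E) := by
  -- j u restricts to a complex structure on W
  have hu : (u ∈ 𝔷 ∨ u = u) := Or.inr rfl
  set f : W →ₗ[ℝ] W := (j u).restrict (hjW u hu) with hf
  have hsq : ∀ x : W, f (f x) = -x := by
    intro x
    have := hpH u hu x x.2
    rw [hιu, huv, one_smul] at this
    ext
    simpa [f, LinearMap.restrict_apply] using this
  have heven : Even (finrank ℝ W) := even_finrank_of_sq_eq_neg_one f hsq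
  -- dim W = dim E + 1
  have hvne : v ≠ 0 := by
    intro h
    rw [h] at huv
    simp at huv
  have hdisj : Disjoint (Submodule.span ℝ {v}) E := by
    rw [Submodule.disjoint_def]
    intro x hx hxE
    rcases Submodule.mem_span_singleton.mp hx with ⟨c, rfl⟩
    by_contra hne
    have hc : c ≠ 0 := by rintro rfl; simp at hne
    exact hvE (by simpa [smul_smul, inv_mul_cancel₀ hc] using E.smul_mem c⁻¹ hxE)
  have hdim : finrank ℝ W = finrank ℝ E + 1 := by
    rw [hW]
    have := Submodule.finrank_sup_add_finrank_inf_eq (Submodule.span ℝ {v}) E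
    rw [hdisj.eq_bot] at this
    simp only [finrank_bot, add_zero] at this
    rw [this, finrank_span_singleton hvne, add_comm]
  rw [hdim] at heven
  rcases heven with ⟨k, hk⟩
  exact ⟨k - 1, by omega⟩
end

section
/- Every Lorentzian pH-type 2-step nilpotent metric Lie algebra with degenerate center and dim E = 1 (i.e., n = 1 in the adapted decomposition u ⊕ z ⊕ ℝv ⊕ ℝe_1 with [v,e_1] = u) has vanishing Ricci tensor; in particular the corresponding left-invariant Lorentzian metric on the 3-dimensional Heisenberg group with degenerate (null) center is flat. -/
open Module

/-- the 3-dimensional Heisenberg algebra with a Lorentzian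
metric making the center null is Ricci-flat (the metric is flat). -/
theorem heisenberg3_null_center_ricci_flat
    {L : Type*} [LieRing L] [LieAlgebra ℝ L] [FiniteDimensional ℝ L]
    (hdim : finrank ℝ L = 3)
    (u v e : L)
    (hspan : Submodule.span ℝ {u, v, e} = ⊤)
    (hbr : ⁅v, e⁆ = u)
    (hucentral : ∀ x : L, ⁅u, x⁆ = 0)
    (B : L →ₗ[ℝ] L →ₗ[ℝ] ℝ)
    (hsymm : ∀ x y : L, B x y = B y x)
    (hnondeg : ∀ x : L, (∀ y : L, B x y = 0) → x = 0)
    (huu : B u u = 0) (hvv : B v v = 0) (huv : B u v = 1)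
    (hee : B e e = 1) (hue : B u e = 0) (hve : B v e = 0)
    (nabla : L →ₗ[ℝ] L →ₗ[ℝ] L)
    (hKoszul : ∀ x y w : L,
      2 * B (nabla x y) w = B ⁅x, y⁆ w - B ⁅y, w⁆ x + B ⁅w, x⁆ y) :
    ∀ x y : L, ricciTensor nabla x y = 0 := by
  -- brackets
  have hvu : ⁅v, u⁆ = 0 := by rw [← lie_skew, hucentral, neg_zero]
  have heu : ⁅e, u⁆ = 0 := by rw [← lie_skew, hucentral, neg_zero]
  have hev : ⁅e, v⁆ = -u := by rw [← lie_skew, hbr]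
  -- symmetric metric values
  have hvu' : B v u = 1 := (hsymm v u).trans huv
  have heu' : B e u = 0 := (hsymm e u).trans hue
  have hev' : B e v = 0 := (hsymm e v).trans hve
  have mem : ∀ z : L, z ∈ Submodule.span ℝ ({u, v, e} : Set L) := by
    intro z; rw [hspan]; trivial
  -- zero test via nondegeneracy
  have hB : ∀ x : L, B x u = 0 → B x v = 0 → B x e = 0 → x = 0 := by
    intro x h1 h2 h3
    apply hnondeg
    intro y
    induction mem y using Submodule.span_induction with
    | mem z hz =>
      simp only [Set.mem_insert_iff, Set.mem_singleton_iff] at hz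
      rcases hz with rfl | rfl | rfl <;> assumption
    | zero => simp
    | add a b _ _ ha hb => simp [ha, hb]
    | smul c a _ ha => simp [ha]
  -- the covariant derivative table
  have n_uu : nabla u u = 0 := by
    have ku := hKoszul u u u
    simp only [lie_self, hucentral, hvu, heu, hbr, hev, map_zero, map_neg,
        LinearMap.zero_apply, LinearMap.neg_apply, huu, hvv, huv, hee, hue,
        hve, hvu', heu', hev', neg_zero, sub_zero, add_zero, zero_sub,
        zero_add, neg_neg] at ku
    have kv := hKoszul u u v
    simp only [lie_self, hucentral, hvu, heu, hbr, hev, map_zero, map_neg,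
        LinearMap.zero_apply, LinearMap.neg_apply, huu, hvv, huv, hee, hue,
        hve, hvu', heu', hev', neg_zero, sub_zero, add_zero, zero_sub,
        zero_add, neg_neg] at kv
    have ke := hKoszul u u e
    simp only [lie_self, hucentral, hvu, heu, hbr, hev, map_zero, map_neg,
        LinearMap.zero_apply, LinearMap.neg_apply, huu, hvv, huv, hee, hue,
        hve, hvu', heu', hev', neg_zero, sub_zero, add_zero, zero_sub,
        zero_add, neg_neg] at ke
    exact hB _ (by linarith) (by linarith) (by linarith)
  have n_uv : nabla u v = 0 := by
    have ku := hKoszul u v u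
    simp only [lie_self, hucentral, hvu, heu, hbr, hev, map_zero, map_neg,
        LinearMap.zero_apply, LinearMap.neg_apply, huu, hvv, huv, hee, hue,
        hve, hvu', heu', hev', neg_zero, sub_zero, add_zero, zero_sub,
        zero_add, neg_neg] at ku
    have kv := hKoszul u v v
    simp only [lie_self, hucentral, hvu, heu, hbr, hev, map_zero, map_neg,
        LinearMap.zero_apply, LinearMap.neg_apply, huu, hvv, huv, hee, hue,
        hve, hvu', heu', hev', neg_zero, sub_zero, add_zero, zero_sub,
        zero_add, neg_neg] at kv
    have ke := hKoszul u v e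
    simp only [lie_self, hucentral, hvu, heu, hbr, hev, map_zero, map_neg,
        LinearMap.zero_apply, LinearMap.neg_apply, huu, hvv, huv, hee, hue,
        hve, hvu', heu', hev', neg_zero, sub_zero, add_zero, zero_sub,
        zero_add, neg_neg] at ke
    exact hB _ (by linarith) (by linarith) (by linarith)
  have n_ue : nabla u e = 0 := by
    have ku := hKoszul u e u
    simp only [lie_self, hucentral, hvu, heu, hbr, hev, map_zero, map_neg,
        LinearMap.zero_apply, LinearMap.neg_apply, huu, hvv, huv, hee, hue,
        hve, hvu', heu', hev', neg_zero, sub_zero, add_zero, zero_sub,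
        zero_add, neg_neg] at ku
    have kv := hKoszul u e v
    simp only [lie_self, hucentral, hvu, heu, hbr, hev, map_zero, map_neg,
        LinearMap.zero_apply, LinearMap.neg_apply, huu, hvv, huv, hee, hue,
        hve, hvu', heu', hev', neg_zero, sub_zero, add_zero, zero_sub,
        zero_add, neg_neg] at kv
    have ke := hKoszul u e e
    simp only [lie_self, hucentral, hvu, heu, hbr, hev, map_zero, map_neg,
        LinearMap.zero_apply, LinearMap.neg_apply, huu, hvv, huv, hee, hue,
        hve, hvu', heu', hev', neg_zero, sub_zero, add_zero, zero_sub,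
        zero_add, neg_neg] at ke
    exact hB _ (by linarith) (by linarith) (by linarith)
  have n_vu : nabla v u = 0 := by
    have ku := hKoszul v u u
    simp only [lie_self, hucentral, hvu, heu, hbr, hev, map_zero, map_neg,
        LinearMap.zero_apply, LinearMap.neg_apply, huu, hvv, huv, hee, hue,
        hve, hvu', heu', hev', neg_zero, sub_zero, add_zero, zero_sub,
        zero_add, neg_neg] at ku
    have kv := hKoszul v u v
    simp only [lie_self, hucentral, hvu, heu, hbr, hev, map_zero, map_neg,
        LinearMap.zero_apply, LinearMap.neg_apply, huu, hvv, huv, hee, hue,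
        hve, hvu', heu', hev', neg_zero, sub_zero, add_zero, zero_sub,
        zero_add, neg_neg] at kv
    have ke := hKoszul v u e
    simp only [lie_self, hucentral, hvu, heu, hbr, hev, map_zero, map_neg,
        LinearMap.zero_apply, LinearMap.neg_apply, huu, hvv, huv, hee, hue,
        hve, hvu', heu', hev', neg_zero, sub_zero, add_zero, zero_sub,
        zero_add, neg_neg] at ke
    exact hB _ (by linarith) (by linarith) (by linarith)
  have n_eu : nabla e u = 0 := by
    have ku := hKoszul e u u
    simp only [lie_self, hucentral, hvu, heu, hbr, hev, map_zero, map_neg,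
        LinearMap.zero_apply, LinearMap.neg_apply, huu, hvv, huv, hee, hue,
        hve, hvu', heu', hev', neg_zero, sub_zero, add_zero, zero_sub,
        zero_add, neg_neg] at ku
    have kv := hKoszul e u v
    simp only [lie_self, hucentral, hvu, heu, hbr, hev, map_zero, map_neg,
        LinearMap.zero_apply, LinearMap.neg_apply, huu, hvv, huv, hee, hue,
        hve, hvu', heu', hev', neg_zero, sub_zero, add_zero, zero_sub,
        zero_add, neg_neg] at kv
    have ke := hKoszul e u e
    simp only [lie_self, hucentral, hvu, heu, hbr, hev, map_zero, map_neg,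
        LinearMap.zero_apply, LinearMap.neg_apply, huu, hvv, huv, hee, hue,
        hve, hvu', heu', hev', neg_zero, sub_zero, add_zero, zero_sub,
        zero_add, neg_neg] at ke
    exact hB _ (by linarith) (by linarith) (by linarith)
  have n_ev : nabla e v = 0 := by
    have ku := hKoszul e v u
    simp only [lie_self, hucentral, hvu, heu, hbr, hev, map_zero, map_neg,
        LinearMap.zero_apply, LinearMap.neg_apply, huu, hvv, huv, hee, hue,
        hve, hvu', heu', hev', neg_zero, sub_zero, add_zero, zero_sub,
        zero_add, neg_neg] at ku
    have kv := hKoszul e v v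
    simp only [lie_self, hucentral, hvu, heu, hbr, hev, map_zero, map_neg,
        LinearMap.zero_apply, LinearMap.neg_apply, huu, hvv, huv, hee, hue,
        hve, hvu', heu', hev', neg_zero, sub_zero, add_zero, zero_sub,
        zero_add, neg_neg] at kv
    have ke := hKoszul e v e
    simp only [lie_self, hucentral, hvu, heu, hbr, hev, map_zero, map_neg,
        LinearMap.zero_apply, LinearMap.neg_apply, huu, hvv, huv, hee, hue,
        hve, hvu', heu', hev', neg_zero, sub_zero, add_zero, zero_sub,
        zero_add, neg_neg] at ke
    exact hB _ (by linarith) (by linarith) (by linarith)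
  have n_ee : nabla e e = 0 := by
    have ku := hKoszul e e u
    simp only [lie_self, hucentral, hvu, heu, hbr, hev, map_zero, map_neg,
        LinearMap.zero_apply, LinearMap.neg_apply, huu, hvv, huv, hee, hue,
        hve, hvu', heu', hev', neg_zero, sub_zero, add_zero, zero_sub,
        zero_add, neg_neg] at ku
    have kv := hKoszul e e v
    simp only [lie_self, hucentral, hvu, heu, hbr, hev, map_zero, map_neg,
        LinearMap.zero_apply, LinearMap.neg_apply, huu, hvv, huv, hee, hue,
        hve, hvu', heu', hev', neg_zero, sub_zero, add_zero, zero_sub,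
        zero_add, neg_neg] at kv
    have ke := hKoszul e e e
    simp only [lie_self, hucentral, hvu, heu, hbr, hev, map_zero, map_neg,
        LinearMap.zero_apply, LinearMap.neg_apply, huu, hvv, huv, hee, hue,
        hve, hvu', heu', hev', neg_zero, sub_zero, add_zero, zero_sub,
        zero_add, neg_neg] at ke
    exact hB _ (by linarith) (by linarith) (by linarith)
  have n_vv : nabla v v = -e := by
    have ku := hKoszul v v u
    simp only [lie_self, hucentral, hvu, heu, hbr, hev, map_zero, map_neg,
        LinearMap.zero_apply, LinearMap.neg_apply, huu, hvv, huv, hee, hue,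
        hve, hvu', heu', hev', neg_zero, sub_zero, add_zero, zero_sub,
        zero_add, neg_neg] at ku
    have kv := hKoszul v v v
    simp only [lie_self, hucentral, hvu, heu, hbr, hev, map_zero, map_neg,
        LinearMap.zero_apply, LinearMap.neg_apply, huu, hvv, huv, hee, hue,
        hve, hvu', heu', hev', neg_zero, sub_zero, add_zero, zero_sub,
        zero_add, neg_neg] at kv
    have ke := hKoszul v v e
    simp only [lie_self, hucentral, hvu, heu, hbr, hev, map_zero, map_neg,
        LinearMap.zero_apply, LinearMap.neg_apply, huu, hvv, huv, hee, hue,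
        hve, hvu', heu', hev', neg_zero, sub_zero, add_zero, zero_sub,
        zero_add, neg_neg] at ke
    refine eq_neg_of_add_eq_zero_left (hB _ ?_ ?_ ?_) <;>
      rw [map_add, LinearMap.add_apply] <;>
      simp only [heu', hev', hee] <;> linarith
  have n_ve : nabla v e = u := by
    have ku := hKoszul v e u
    simp only [lie_self, hucentral, hvu, heu, hbr, hev, map_zero, map_neg,
        LinearMap.zero_apply, LinearMap.neg_apply, huu, hvv, huv, hee, hue,
        hve, hvu', heu', hev', neg_zero, sub_zero, add_zero, zero_sub,
        zero_add, neg_neg] at ku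
    have kv := hKoszul v e v
    simp only [lie_self, hucentral, hvu, heu, hbr, hev, map_zero, map_neg,
        LinearMap.zero_apply, LinearMap.neg_apply, huu, hvv, huv, hee, hue,
        hve, hvu', heu', hev', neg_zero, sub_zero, add_zero, zero_sub,
        zero_add, neg_neg] at kv
    have ke := hKoszul v e e
    simp only [lie_self, hucentral, hvu, heu, hbr, hev, map_zero, map_neg,
        LinearMap.zero_apply, LinearMap.neg_apply, huu, hvv, huv, hee, hue,
        hve, hvu', heu', hev', neg_zero, sub_zero, add_zero, zero_sub,
        zero_add, neg_neg] at ke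
    refine sub_eq_zero.mp (hB _ ?_ ?_ ?_) <;>
      rw [map_sub, LinearMap.sub_apply] <;>
      simp only [huu, huv, hue] <;> linarith
  -- pointwise formula for the curvature endomorphism
  have cval : ∀ x y w : L, curvatureEndo nabla x y w
      = nabla w (nabla x y) - nabla x (nabla w y) + nabla ⁅x, w⁆ y := by
    intro x y w
    simp [curvatureEndo, LinearMap.sub_apply, LinearMap.add_apply,
      LinearMap.comp_apply, LinearMap.flip_apply, LieAlgebra.ad_apply]
  -- bilinearity of the curvature endomorphism
  have addx : ∀ x x' y : L, curvatureEndo nabla (x + x') y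
      = curvatureEndo nabla x y + curvatureEndo nabla x' y := by
    intro x x' y
    apply LinearMap.ext; intro w
    simp only [cval, LinearMap.add_apply, map_add, add_lie,
      LinearMap.add_apply]
    abel
  have smulx : ∀ (c : ℝ) (x y : L), curvatureEndo nabla (c • x) y
      = c • curvatureEndo nabla x y := by
    intro c x y
    apply LinearMap.ext; intro w
    simp only [cval, LinearMap.smul_apply, map_smul, smul_lie,
      smul_sub, smul_add]
  have addy : ∀ x y y' : L, curvatureEndo nabla x (y + y')
      = curvatureEndo nabla x y + curvatureEndo nabla x y' := by
    intro x y y'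
    apply LinearMap.ext; intro w
    simp only [cval, LinearMap.add_apply, map_add]
    abel
  have smuly : ∀ (c : ℝ) (x y : L), curvatureEndo nabla x (c • y)
      = c • curvatureEndo nabla x y := by
    intro c x y
    apply LinearMap.ext; intro w
    simp only [cval, LinearMap.smul_apply, map_smul, smul_sub, smul_add]
  have zeroy : ∀ x : L, curvatureEndo nabla x 0 = 0 := by
    intro x
    apply LinearMap.ext; intro w
    simp [cval]
  have zerox : ∀ y : L, curvatureEndo nabla 0 y = 0 := by
    intro y
    apply LinearMap.ext; intro w
    simp [cval]
  -- the curvature vanishes on basis elements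
  have base : ∀ x ∈ ({u, v, e} : Set L), ∀ y ∈ ({u, v, e} : Set L),
      curvatureEndo nabla x y = 0 := by
    intro x hx y hy
    apply LinearMap.ext_on hspan
    intro w hw
    simp only [Set.mem_insert_iff, Set.mem_singleton_iff] at hx hy hw
    simp only [LinearMap.zero_apply]
    rw [cval]
    rcases hx with rfl | rfl | rfl <;> rcases hy with rfl | rfl | rfl <;>
      rcases hw with rfl | rfl | rfl <;>
      simp [n_uu, n_uv, n_ue, n_vu, n_vv, n_ve, n_eu, n_ev, n_ee,
        hbr, hev, hvu, heu, hucentral, lie_self]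
  -- extend bilinearly
  have hy1 : ∀ x ∈ ({u, v, e} : Set L), ∀ y : L,
      curvatureEndo nabla x y = 0 := by
    intro x hx y
    induction mem y using Submodule.span_induction with
    | mem z hz => exact base x hx z hz
    | zero => exact zeroy x
    | add a b _ _ ha hb => rw [addy, ha, hb, add_zero]
    | smul c a _ ha => rw [smuly, ha, smul_zero]
  have hC : ∀ x y : L, curvatureEndo nabla x y = 0 := by
    intro x y
    induction mem x using Submodule.span_induction with
    | mem z hz => exact hy1 z hz y
    | zero => exact zerox y
    | add a b _ _ ha hb => rw [addx, ha, hb, add_zero]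
    | smul c a _ ha => rw [smulx, ha, smul_zero]
  intro x y
  rw [ricciTensor, hC, map_zero]
end
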